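/- Let C be a weakly compact convex subset of a Banach space E whose norm has the Opial property, S a commutative semigroup, {T(t) : t ∈ S} a nonexpansive semigroup on C, and μ an invariant mean on a suitable subspace X of B(S). If T_μ z = z for some z ∈ C, then z is a common fixed point: T(t)z = z for all t ∈ S. -/

import Mathlib

open BoundedContinuousFunction
/-- The `{0,1}`-valued real indicator of a set, as an element of `B(S)`
(`S` carries the discrete topology, so `B(S)` is the space of bounded
continuous functions `S →ᵇ ℝ`). -/
noncomputable def indBCF {S : Type*} [TopologicalSpace S] [DiscreteTopology S] (A : Set S) :
    S →ᵇ ℝ :=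
  BoundedContinuousFunction.ofNormedAddCommGroup (A.indicator 1)
    continuous_of_discreteTopology 1
    (fun x => by by_cases h : x ∈ A <;> simp [Set.indicator_apply, h])

/-- The translate `(ℓ_s a)(t) = a (s + t)` as an element of `B(S)`. -/
noncomputable def transBCF {S : Type*} [AddSemigroup S] [TopologicalSpace S] [DiscreteTopology S]
    (s : S) (a : S →ᵇ ℝ) : S →ᵇ ℝ :=
  a.compContinuous ⟨fun t => s + t, continuous_of_discreteTopology⟩

open Filter Topology Set

/-!
Let `r = sup_t ‖T t z - z‖`. Since `μ` is invariant and `T_μ z = z`, every orbit function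
`t ↦ f (T (s + t) z - z)` has mean `0`. By nonexpansiveness, a functional of norm at most one
that almost norms `T τ z - z`, with `‖T τ z - z‖` close to `r`, stays almost nonnegative on
`T (τ + S) z`; so finitely many such orbit functions, suitably weighted, are simultaneously small
at one point. Inductively this gives `τ k ∈ t₀ + S` and `f k` with
`f k (T (τ k) z - z) ≥ r - 4⁻ᵏ` and `f j (T (τ k) z - z) ≤ 4 ⋅ 2⁻ʲ` for `j < k`.
A weakly convergent subsequence of `T (τ k) z` (the weak topology is metrizable on weakly compact
subsets of the separable closed span of the sequence) has a limit `u` with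
`liminf ‖T (τ k) z - u‖ ≥ r`, while `z` and `T t₀ z` both lie within `r` of every `T (τ k) z`.
The Opial property then forces `z = u = T t₀ z`.
-/

theorem exists_seq_of_forall_extend {α : Type*} [Nonempty α] (P : ℕ → α → Prop)
    (R : ℕ → α → α → Prop)
    (h : ∀ k (x : ℕ → α), (∀ j < k, P j (x j)) → ∃ y, P k y ∧ ∀ j < k, R j (x j) y) :
    ∃ x : ℕ → α, ∀ k, P k (x k) ∧ ∀ j < k, R j (x j) (x k) := by
  classical
  choose! next hnext using h
  let x : ℕ → α := Nat.strongRec fun k rec =>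
    next k fun j => if hj : j < k then rec j hj else Classical.arbitrary α
  have hx (k : ℕ) : x k = next k fun j => if j < k then x j else Classical.arbitrary α := by
    simp only [x]
    rw [Nat.strongRec_eq]
    simp only [dite_eq_ite]
  refine ⟨x, fun k => ?_⟩
  induction k using Nat.strong_induction_on with
  | _ k ih =>
    rw [hx k]
    obtain ⟨hP, hR⟩ := hnext k (fun j => if j < k then x j else Classical.arbitrary α)
      fun j hj => by simpa [hj] using (ih j hj).1
    exact ⟨hP, fun j hj => by simpa [hj] using hR j hj⟩

theorem Finset.exists_forall_eq_add {S ι : Type*} [AddCommSemigroup S] [Nonempty S]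
    (s : Finset ι) (τ : ι → S) : ∃ σ, ∀ i ∈ s, ∃ ρ, σ = τ i + ρ := by
  classical
  induction s using Finset.induction_on with
  | empty => exact ⟨Classical.arbitrary S, by simp⟩
  | insert i s _ ih =>
    obtain ⟨σ, hσ⟩ := ih
    refine ⟨τ i + σ, ?_⟩
    simp only [Finset.mem_insert, forall_eq_or_imp]
    refine ⟨⟨σ, rfl⟩, fun j hj => ?_⟩
    obtain ⟨ρ, hρ⟩ := hσ j hj
    exact ⟨τ i + ρ, by rw [hρ]; ac_rfl⟩

theorem Bornology.IsBounded.exists_isLUB_norm_sub {E ι : Type*} [SeminormedAddCommGroup E]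
    [Nonempty ι] {C : Set E} (hC : Bornology.IsBounded C) {y : ι → E} (hy : ∀ i, y i ∈ C)
    {z : E} (hz : z ∈ C) : ∃ r, IsLUB (range fun i => ‖y i - z‖) r := by
  obtain ⟨R, hR⟩ := hC.exists_norm_le
  refine ⟨_, isLUB_ciSup ⟨R + R, ?_⟩⟩
  rintro _ ⟨i, rfl⟩
  exact (norm_sub_le _ _).trans (add_le_add (hR _ (hy i)) (hR z hz))

theorem sum_two_pow_mul_four_inv_pow_le (k : ℕ) :
    ∑ j ∈ Finset.range k, (2 : ℝ) ^ j * 4⁻¹ ^ j ≤ 2 := by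
  have h (j : ℕ) : (2 : ℝ) ^ j * 4⁻¹ ^ j = (1 / 2) ^ j := by rw [← mul_pow]; norm_num
  simpa only [h] using sum_geometric_two_le k

section WeakTopology

variable {E : Type*} [NormedAddCommGroup E] [NormedSpace ℝ E]

theorem TopologicalSpace.IsSeparable.exists_dual_seq_separating {s : Set E}
    (hs : TopologicalSpace.IsSeparable s) :
    ∃ g : ℕ → E →L[ℝ] ℝ, ∀ v ∈ s, (∀ n, g n v = 0) → v = 0 := by
  obtain ⟨c, hc, hsc⟩ := hs
  obtain ⟨e, hce⟩ := countable_iff_exists_subset_range.mp hc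
  choose g hg1 hge using fun n => exists_dual_vector'' ℝ (e n)
  refine ⟨g, fun v hv hgv => norm_le_zero_iff.mp <| not_lt.mp fun hv0 => ?_⟩
  obtain ⟨_, ⟨n, rfl⟩, hn⟩ :=
    Metric.mem_closure_iff.mp (closure_mono hce (hsc hv)) (‖v‖ / 2) (half_pos hv0)
  rw [dist_eq_norm] at hn
  have h1 : ‖e n‖ ≤ ‖v - e n‖ := by
    calc ‖e n‖ = g n (e n - v) := by rw [map_sub, hgv, sub_zero, hge]; rfl
      _ ≤ ‖g n‖ * ‖e n - v‖ := (le_abs_self _).trans ((g n).le_opNorm _)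
      _ ≤ ‖v - e n‖ := by rw [norm_sub_rev]; exact mul_le_of_le_one_left (norm_nonneg _) (hg1 n)
  linarith [norm_le_norm_add_norm_sub' v (e n)]

theorem IsCompact.exists_subseq_weak_tendsto {C : Set E} (hC : IsCompact (toWeakSpace ℝ E '' C))
    {x : ℕ → E} (hx : ∀ n, x n ∈ C) :
    ∃ u ∈ C, ∃ φ : ℕ → ℕ, StrictMono φ ∧
      ∀ f : E →L[ℝ] ℝ, Tendsto (fun n => f (x (φ n))) atTop (𝓝 (f u)) := by
  set V := (Submodule.span ℝ (range x)).topologicalClosure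
  have hxV : ∀ n, x n ∈ V := fun n =>
    Submodule.le_topologicalClosure _ (Submodule.subset_span (mem_range_self n))
  obtain ⟨g, hg⟩ :=
    ((countable_range x).isSeparable.span (R := ℝ)).closure.exists_dual_seq_separating
  have hKC : IsCompact (toWeakSpace ℝ E '' (C ∩ V)) := by
    rw [image_inter (toWeakSpace ℝ E).injective]
    refine hC.inter_right ?_
    rw [← (Submodule.isClosed_topologicalClosure _).closure_eq,
      V.convex.toWeakSpace_closure (𝕜 := ℝ)]
    exact isClosed_closure
  have : CompactSpace (toWeakSpace ℝ E '' (C ∩ V)) := isCompact_iff_compactSpace.mp hKC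
  have : TopologicalSpace.MetrizableSpace (toWeakSpace ℝ E '' (C ∩ V)) :=
    Metric.PiNatEmbed.TopologicalSpace.MetrizableSpace.of_countable_separating
      (fun n (p : toWeakSpace ℝ E '' (C ∩ V)) => g n ((toWeakSpace ℝ E).symm p))
      (fun n => (WeakBilin.eval_continuous _ (g n)).comp
        (continuous_subtype_val (p := (· ∈ toWeakSpace ℝ E '' (C ∩ V)))))
      fun p q hpq => by
        obtain ⟨_, ⟨a, ha, rfl⟩⟩ := p
        obtain ⟨_, ⟨b, hb, rfl⟩⟩ := q
        have hab : a - b ≠ 0 := sub_ne_zero.mpr fun h => hpq (by simp [h])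
        have hV : a - b ∈ closure (Submodule.span ℝ (range x) : Set E) := V.sub_mem ha.2 hb.2
        obtain ⟨n, hn⟩ := not_forall.mp (mt (hg _ hV) hab)
        exact ⟨n, fun h => hn (by simpa [map_sub, sub_eq_zero] using h)⟩
  obtain ⟨⟨_, ⟨u, hu, rfl⟩⟩, φ, hφ, hlim⟩ :=
    CompactSpace.tendsto_subseq fun n =>
      (⟨toWeakSpace ℝ E (x n), x n, ⟨hx n, hxV n⟩, rfl⟩ : toWeakSpace ℝ E '' (C ∩ V))
  exact ⟨u, hu.1, φ, hφ, fun f =>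
    ((WeakBilin.eval_continuous _ f).tendsto _).comp (tendsto_subtype_rng.mp hlim)⟩

theorem isBounded_of_isCompact_toWeakSpace {C : Set E} (hC : IsCompact (toWeakSpace ℝ E '' C)) :
    Bornology.IsBounded C := by
  have hpt (f : E →L[ℝ] ℝ) :
      ∃ M, ∀ c : C, ‖NormedSpace.inclusionInDoubleDualLi ℝ (c : E) f‖ ≤ M := by
    obtain ⟨M, hM⟩ := (hC.image (WeakBilin.eval_continuous _ f)).isBounded.exists_norm_le
    exact ⟨M, fun c => hM _ ⟨_, ⟨c, c.2, rfl⟩, rfl⟩⟩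
  obtain ⟨M, hM⟩ := banach_steinhaus hpt
  refine isBounded_iff_forall_norm_le.mpr ⟨M, fun c hc => ?_⟩
  rw [← (NormedSpace.inclusionInDoubleDualLi ℝ).norm_map c]
  exact hM ⟨c, hc⟩

theorem apply_le_norm_of_norm_le_one {f : E →L[ℝ] ℝ} (hf : ‖f‖ ≤ 1) (v : E) : f v ≤ ‖v‖ :=
  (le_abs_self _).trans <| (f.le_of_opNorm_le hf v).trans_eq (one_mul _)

theorem eq_of_opial
    (hOpial : ∀ (x : ℕ → E) (x₀ : E),
      (∀ f : E →L[ℝ] ℝ, Tendsto (fun n => f (x n)) atTop (𝓝 (f x₀))) →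
      ∀ y : E, y ≠ x₀ → liminf (fun n => ‖x n - x₀‖) atTop < liminf (fun n => ‖x n - y‖) atTop)
    {x : ℕ → E} {u y : E} {l : ℕ → ℝ} {r : ℝ}
    (hxu : ∀ f : E →L[ℝ] ℝ, Tendsto (fun n => f (x n)) atTop (𝓝 (f u)))
    (hl : Tendsto l atTop (𝓝 r)) (hlu : ∀ n, l n ≤ ‖x n - u‖) (hy : ∀ n, ‖x n - y‖ ≤ r) :
    y = u := by
  by_contra hyu
  have hu : r ≤ liminf (fun n => ‖x n - u‖) atTop := by
    refine hl.liminf_eq ▸ liminf_le_liminf (Eventually.of_forall hlu) hl.isBoundedUnder_ge ?_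
    refine isCoboundedUnder_ge_of_le atTop (x := r + ‖y - u‖) fun n => ?_
    calc ‖x n - u‖ ≤ ‖x n - y‖ + ‖y - u‖ := norm_sub_le_norm_sub_add_norm_sub _ _ _
      _ ≤ r + ‖y - u‖ := by gcongr; exact hy n
  have hy' : liminf (fun n => ‖x n - y‖) atTop ≤ r :=
    liminf_le_of_frequently_le (Frequently.of_forall hy)
      (isBoundedUnder_of ⟨0, fun n => norm_nonneg _⟩)
  linarith [hOpial x u hxu y hyu]

theorem sub_le_norm_sub_of_weak_tendsto {x : ℕ → E} {f : ℕ → E →L[ℝ] ℝ} {u z : E} {η : ℕ → ℝ}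
    {φ : ℕ → ℕ} (hφ : StrictMono φ)
    (hu : ∀ g : E →L[ℝ] ℝ, Tendsto (fun i => g (x (φ i))) atTop (𝓝 (g u)))
    (hf : ∀ k, ‖f k‖ ≤ 1) (hη : ∀ j k, j < k → f j (x k - z) ≤ η j) (k : ℕ) :
    f k (x k - z) - η k ≤ ‖x k - u‖ := by
  have hfu : f k (u - z) ≤ η k := by
    rw [map_sub]
    refine le_of_tendsto ((hu (f k)).sub_const (f k z)) ?_
    filter_upwards [hφ.tendsto_atTop.eventually_gt_atTop k] with i hi
    simpa only [map_sub] using hη k (φ i) hi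
  calc f k (x k - z) - η k ≤ f k (x k - z) - f k (u - z) := by linarith
    _ = f k (x k - u) := by rw [← map_sub]; congr 1; abel
    _ ≤ ‖x k - u‖ := apply_le_norm_of_norm_le_one (hf k) _

end WeakTopology

section Orbit

variable {S E : Type*} [AddCommSemigroup S] [NormedAddCommGroup E] {T : S → E → E} {z : E}

theorem norm_apply_add_sub_le {C : Set E} (hmaps : ∀ t, MapsTo (T t) C C)
    (hne : ∀ t, ∀ x ∈ C, ∀ y ∈ C, ‖T t x - T t y‖ ≤ ‖x - y‖)
    (hsg : ∀ s t : S, ∀ x ∈ C, T (s + t) x = T s (T t x)) (hz : z ∈ C) (τ ρ : S) :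
    ‖T (τ + ρ) z - T τ z‖ ≤ ‖T ρ z - z‖ := by
  rw [hsg τ ρ z hz]
  exact hne τ _ (hmaps ρ hz) z hz

variable [NormedSpace ℝ E]

theorem apply_sub_norm_le_apply_add (hT : ∀ τ ρ, ‖T (τ + ρ) z - T τ z‖ ≤ ‖T ρ z - z‖)
    {f : E →L[ℝ] ℝ} (hf : ‖f‖ ≤ 1) (τ ρ : S) :
    f (T τ z - z) - ‖T ρ z - z‖ ≤ f (T (τ + ρ) z - z) := by
  have : f (T τ z - z) - f (T (τ + ρ) z - z) ≤ ‖T (τ + ρ) z - T τ z‖ := by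
    rw [← map_sub, ← norm_neg]
    refine (apply_le_norm_of_norm_le_one hf _).trans_eq ?_
    congr 1
    abel
  linarith [hT τ ρ]

theorem neg_le_apply_add_of_le_apply (hT : ∀ τ ρ, ‖T (τ + ρ) z - T τ z‖ ≤ ‖T ρ z - z‖)
    {r : ℝ} (hr : IsLUB (range fun t => ‖T t z - z‖) r) {f : E →L[ℝ] ℝ} (hf : ‖f‖ ≤ 1)
    {τ : S} {ε : ℝ} (hτ : r - ε ≤ f (T τ z - z)) (ρ : S) : -ε ≤ f (T (τ + ρ) z - z) := by
  linarith [apply_sub_norm_le_apply_add hT hf τ ρ, hr.1 ⟨ρ, rfl⟩]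

theorem exists_near_sup_of_orbit_mean (hT : ∀ τ ρ, ‖T (τ + ρ) z - T τ z‖ ≤ ‖T ρ z - z‖)
    (hmean : ∀ (g h : E →L[ℝ] ℝ) (s₁ s₂ : S),
      ∃ t, g (T (s₁ + t) z - z) + h (T (s₂ + t) z - z) < 1)
    {r : ℝ} (hr : IsLUB (range fun t => ‖T t z - z‖) r) (t₀ : S) (k : ℕ) (τ : ℕ → S)
    (f : ℕ → E →L[ℝ] ℝ) (hf : ∀ j < k, ‖f j‖ ≤ 1 ∧ r - 4⁻¹ ^ j ≤ f j (T (τ j) z - z)) :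
    ∃ p, (∃ ρ, p = t₀ + ρ) ∧ r - 4⁻¹ ^ k ≤ ‖T p z - z‖ ∧
      ∀ j < k, f j (T p z - z) ≤ 4 * 2⁻¹ ^ j := by
  have : Nonempty S := ⟨t₀⟩
  obtain ⟨σ, hσ⟩ := (Finset.range k).exists_forall_eq_add τ
  set q : ℝ := 4⁻¹ ^ (k + 1)
  have hq : 0 < q := by positivity
  obtain ⟨_, ⟨ts, rfl⟩, hts, -⟩ := hr.exists_between (sub_lt_self r hq)
  obtain ⟨f', hf'1, hf'⟩ := exists_dual_vector'' ℝ (T ts z - z)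
  simp only [RCLike.ofReal_real_eq_id, id] at hts hf'
  -- The summands of `hsum` below are nonnegative, and `hsum` is `ht` plus constants totalling
  -- at most `3`; hence every summand is `< 4`.
  obtain ⟨t, ht⟩ := hmean (∑ j ∈ Finset.range k, (2 : ℝ) ^ j • f j) (q⁻¹ • f') (t₀ + σ)
    (ts + (t₀ + σ))
  set p := t₀ + σ + t
  rw [add_assoc ts] at ht
  simp only [FunLike.coe_sum, Finset.sum_apply, FunLike.coe_smul, Pi.smul_apply,
    smul_eq_mul] at ht
  have hprev : ∀ j ∈ Finset.range k, 0 ≤ 2 ^ j * (f j (T p z - z) + 4⁻¹ ^ j) := by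
    intro j hj
    obtain ⟨ρ, hρ⟩ := hσ j hj
    have hp : τ j + (ρ + (t₀ + t)) = p := by simp only [p, hρ]; ac_rfl
    obtain ⟨hfj, hτj⟩ := hf j (Finset.mem_range.mp hj)
    have := hp ▸ neg_le_apply_add_of_le_apply hT hr hfj hτj (ρ + (t₀ + t))
    exact mul_nonneg (by positivity) (by linarith)
  have hnew : 0 ≤ q⁻¹ * (f' (T (ts + p) z - z) + q) :=
    mul_nonneg (inv_nonneg.2 hq.le) <| by
      linarith [neg_le_apply_add_of_le_apply hT hr hf'1 (τ := ts) (ε := q) (by linarith) p]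
  have hsum : ∑ j ∈ Finset.range k, 2 ^ j * (f j (T p z - z) + 4⁻¹ ^ j) +
      q⁻¹ * (f' (T (ts + p) z - z) + q) < 4 := by
    simp only [mul_add, Finset.sum_add_distrib, inv_mul_cancel₀ hq.ne']
    linarith [sum_two_pow_mul_four_inv_pow_le k]
  have hprev_sum := Finset.sum_nonneg hprev
  refine ⟨p, ⟨σ + t, add_assoc _ _ _⟩, ?_, fun j hj => ?_⟩
  · have h4 : f' (T (ts + p) z - z) + q < q * 4 := by
      rw [← inv_mul_lt_iff₀ hq]
      linarith
    have hk : (4⁻¹ : ℝ) ^ k = 4 * q := by simp only [q, pow_succ]; ring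
    linarith [hf' ▸ apply_sub_norm_le_apply_add hT hf'1 ts p]
  · have h1 := Finset.single_le_sum hprev (Finset.mem_range.mpr hj)
    have h2 : (2 : ℝ) ^ j * (4 * 2⁻¹ ^ j) = 4 := by rw [mul_left_comm, ← mul_pow]; norm_num
    have : 0 < (2 : ℝ) ^ j := by positivity
    have : 0 ≤ (4⁻¹ : ℝ) ^ j := by positivity
    nlinarith

theorem exists_orbit_seq_norming (hT : ∀ τ ρ, ‖T (τ + ρ) z - T τ z‖ ≤ ‖T ρ z - z‖)
    (hmean : ∀ (g h : E →L[ℝ] ℝ) (s₁ s₂ : S),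
      ∃ t, g (T (s₁ + t) z - z) + h (T (s₂ + t) z - z) < 1)
    {r : ℝ} (hr : IsLUB (range fun t => ‖T t z - z‖) r) (t₀ : S) :
    ∃ x : ℕ → S × (E →L[ℝ] ℝ), ∀ k,
      ((∃ ρ, (x k).1 = t₀ + ρ) ∧ ‖(x k).2‖ ≤ 1 ∧ r - 4⁻¹ ^ k ≤ (x k).2 (T (x k).1 z - z)) ∧
      ∀ j < k, (x j).2 (T (x k).1 z - z) ≤ 4 * 2⁻¹ ^ j := by
  have : Nonempty S := ⟨t₀⟩
  refine exists_seq_of_forall_extend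
    (fun k (y : S × (E →L[ℝ] ℝ)) =>
      (∃ ρ, y.1 = t₀ + ρ) ∧ ‖y.2‖ ≤ 1 ∧ r - 4⁻¹ ^ k ≤ y.2 (T y.1 z - z))
    (fun j (y y' : S × (E →L[ℝ] ℝ)) => y.2 (T y'.1 z - z) ≤ (4 : ℝ) * 2⁻¹ ^ j)
    fun k x hx => ?_
  obtain ⟨p, hp, hpr, hpf⟩ := exists_near_sup_of_orbit_mean hT hmean hr t₀ k (fun j => (x j).1)
    (fun j => (x j).2) fun j hj => (hx j hj).2
  obtain ⟨f, hf1, hf⟩ := exists_dual_vector'' ℝ (T p z - z)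
  exact ⟨(p, f), ⟨hp, hf1, hpr.trans_eq hf.symm⟩, hpf⟩

end Orbit

section InvariantMean

variable {S E : Type*} [AddCommSemigroup S] [TopologicalSpace S] [DiscreteTopology S]
  [NormedAddCommGroup E] [NormedSpace ℝ E] {T : S → E → E} {z : E}
  {X : Subspace ℝ (S →ᵇ ℝ)} {μ : X →L[ℝ] ℝ}

theorem exists_translate_orbit (hXinv : ∀ a ∈ X, ∀ s : S, transBCF s a ∈ X)
    (hμinv : ∀ (a : X) (s : S), μ ⟨transBCF s a.1, hXinv a.1 a.2 s⟩ = μ a)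
    (horb : ∀ f : E →L[ℝ] ℝ, ∃ a ∈ X, ∀ t : S, a t = f (T t z))
    (hfix : ∀ (f : E →L[ℝ] ℝ) (a : S →ᵇ ℝ) (ha : a ∈ X),
      (∀ t : S, a t = f (T t z)) → μ ⟨a, ha⟩ = f z)
    (f : E →L[ℝ] ℝ) (s : S) :
    ∃ a : X, (∀ t, (a : S →ᵇ ℝ) t = f (T (s + t) z)) ∧ μ a = f z := by
  obtain ⟨a, ha, hat⟩ := horb f
  exact ⟨⟨transBCF s a, hXinv a ha s⟩, fun t => hat (s + t),
    (hμinv ⟨a, ha⟩ s).trans (hfix f a ha hat)⟩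

theorem exists_orbit_add_lt (hμ : ∀ a : X, ⨅ t, (a : S →ᵇ ℝ) t ≤ μ a)
    (hXinv : ∀ a ∈ X, ∀ s : S, transBCF s a ∈ X)
    (hμinv : ∀ (a : X) (s : S), μ ⟨transBCF s a.1, hXinv a.1 a.2 s⟩ = μ a)
    (horb : ∀ f : E →L[ℝ] ℝ, ∃ a ∈ X, ∀ t : S, a t = f (T t z))
    (hfix : ∀ (f : E →L[ℝ] ℝ) (a : S →ᵇ ℝ) (ha : a ∈ X),
      (∀ t : S, a t = f (T t z)) → μ ⟨a, ha⟩ = f z)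
    (g h : E →L[ℝ] ℝ) (s₁ s₂ : S) {δ : ℝ} (hδ : 0 < δ) :
    ∃ t, g (T (s₁ + t) z - z) + h (T (s₂ + t) z - z) < δ := by
  have : Nonempty S := ⟨s₁⟩
  obtain ⟨a, hat, hμa⟩ := exists_translate_orbit hXinv hμinv horb hfix g s₁
  obtain ⟨b, hbt, hμb⟩ := exists_translate_orbit hXinv hμinv horb hfix h s₂
  obtain ⟨t, ht⟩ := exists_lt_of_ciInf_lt <|
    (hμ (a + b)).trans_lt (lt_add_of_pos_right (μ (a + b)) hδ)
  refine ⟨t, ?_⟩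
  simp only [Submodule.coe_add, BoundedContinuousFunction.coe_add, Pi.add_apply, hat, hbt,
    map_add, hμa, hμb] at ht
  simp only [map_sub]
  linarith

end InvariantMean

theorem stmt17_general {S E : Type*} [AddCommSemigroup S] [TopologicalSpace S] [DiscreteTopology S]
    [NormedAddCommGroup E] [NormedSpace ℝ E]
    (C : Set E)
    (hwcpt : IsCompact ((toWeakSpace ℝ E) '' C))
    (hOpial : ∀ (x : ℕ → E) (x₀ : E),
      (∀ f : E →L[ℝ] ℝ, Filter.Tendsto (fun n => f (x n)) Filter.atTop (nhds (f x₀))) →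
      ∀ y : E, y ≠ x₀ →
        Filter.liminf (fun n => ‖x n - x₀‖) Filter.atTop
          < Filter.liminf (fun n => ‖x n - y‖) Filter.atTop)
    (T : S → E → E)
    (hmaps : ∀ t, Set.MapsTo (T t) C C)
    (hne : ∀ t, ∀ x ∈ C, ∀ y ∈ C, ‖T t x - T t y‖ ≤ ‖x - y‖)
    (hsg : ∀ s t : S, ∀ x ∈ C, T (s + t) x = T s (T t x))
    (X : Subspace ℝ (S →ᵇ ℝ))
    (hXinv : ∀ a ∈ X, ∀ s : S, transBCF s a ∈ X)
    (hXorb : ∀ x ∈ C, ∀ f : E →L[ℝ] ℝ, ∃ a ∈ X, ∀ t : S, a t = f (T t x))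
    (μ : ↥X →L[ℝ] ℝ)
    (hμmean : ∀ a : ↥X, (⨅ t : S, (a : S →ᵇ ℝ) t) ≤ μ a ∧ μ a ≤ ⨆ t : S, (a : S →ᵇ ℝ) t)
    (hμinv : ∀ (a : ↥X) (s : S), μ ⟨transBCF s a.1, hXinv a.1 a.2 s⟩ = μ a)
    (z : E) (hzC : z ∈ C)
    (hfix : ∀ (f : E →L[ℝ] ℝ) (a : S →ᵇ ℝ) (ha : a ∈ X),
      (∀ t : S, a t = f (T t z)) → μ ⟨a, ha⟩ = f z) :
    ∀ t : S, T t z = z := by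
  intro t₀
  have : Nonempty S := ⟨t₀⟩
  have hT := norm_apply_add_sub_le hmaps hne hsg hzC
  obtain ⟨r, hr⟩ := (isBounded_of_isCompact_toWeakSpace hwcpt).exists_isLUB_norm_sub
    (fun t => hmaps t hzC) hzC
  have hmean (g h : E →L[ℝ] ℝ) (s₁ s₂ : S) :=
    exists_orbit_add_lt (fun a => (hμmean a).1) hXinv hμinv (hXorb z hzC) hfix g h s₁ s₂ one_pos
  obtain ⟨x, hx⟩ := exists_orbit_seq_norming hT hmean hr t₀
  obtain ⟨u, -, φ, hφ, hu⟩ := hwcpt.exists_subseq_weak_tendsto fun k => hmaps (x k).1 hzC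
  have hlow := sub_le_norm_sub_of_weak_tendsto (x := fun k => T (x k).1 z) (z := z) hφ hu
    (fun k => (hx k).1.2.1) fun j k hjk => (hx k).2 j hjk
  have hl : Tendsto (fun i => r - 4⁻¹ ^ φ i - 4 * 2⁻¹ ^ φ i) atTop (𝓝 r) := by
    have h4 := (tendsto_pow_atTop_nhds_zero_of_lt_one (r := (4⁻¹ : ℝ)) (by norm_num)
      (by norm_num)).comp hφ.tendsto_atTop
    have h2 := (tendsto_pow_atTop_nhds_zero_of_lt_one (r := (2⁻¹ : ℝ)) (by norm_num)
      (by norm_num)).comp hφ.tendsto_atTop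
    simpa using (tendsto_const_nhds.sub h4).sub (h2.const_mul 4)
  have hlu : ∀ i, r - 4⁻¹ ^ φ i - 4 * 2⁻¹ ^ φ i ≤ ‖T (x (φ i)).1 z - u‖ := fun i => by
    linarith [hlow (φ i), (hx (φ i)).1.2.2]
  have hzu : z = u := eq_of_opial hOpial hu hl hlu fun i => hr.1 ⟨_, rfl⟩
  have htu : T t₀ z = u := eq_of_opial hOpial hu hl hlu fun i => by
    obtain ⟨ρ, hρ⟩ := (hx (φ i)).1.1
    rw [hρ]
    exact (hT t₀ ρ).trans (hr.1 ⟨ρ, rfl⟩)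
  exact htu.trans hzu.symm

/-- Let C be a weakly compact convex subset of a Banach space E with the Opial property, {T(t) : t ∈ S} a commutative semigroup of nonexpansive mappings on C, and μ an invariant mean on a suitable subspace X of B(S). If T_μ z = z for some z ∈ C, then z is a common fixed point: T(t)z = z for all t ∈ S. -/
theorem stmt17 {S E : Type*} [AddCommSemigroup S] [TopologicalSpace S] [DiscreteTopology S]
    [NormedAddCommGroup E] [NormedSpace ℝ E] [CompleteSpace E]
    (C : Set E) (hconv : Convex ℝ C)
    (hwcpt : IsCompact ((toWeakSpace ℝ E) '' C))
    (hOpial : ∀ (x : ℕ → E) (x₀ : E),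
      (∀ f : E →L[ℝ] ℝ, Filter.Tendsto (fun n => f (x n)) Filter.atTop (nhds (f x₀))) →
      ∀ y : E, y ≠ x₀ →
        Filter.liminf (fun n => ‖x n - x₀‖) Filter.atTop
          < Filter.liminf (fun n => ‖x n - y‖) Filter.atTop)
    (T : S → E → E)
    (hmaps : ∀ t, Set.MapsTo (T t) C C)
    (hne : ∀ t, ∀ x ∈ C, ∀ y ∈ C, ‖T t x - T t y‖ ≤ ‖x - y‖)
    (hsg : ∀ s t : S, ∀ x ∈ C, T (s + t) x = T s (T t x))
    (X : Subspace ℝ (S →ᵇ ℝ)) (hX1 : (1 : S →ᵇ ℝ) ∈ X)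
    (hXinv : ∀ a ∈ X, ∀ s : S, transBCF s a ∈ X)
    (hXorb : ∀ x ∈ C, ∀ f : E →L[ℝ] ℝ, ∃ a ∈ X, ∀ t : S, a t = f (T t x))
    (μ : ↥X →L[ℝ] ℝ)
    (hμmean : ∀ a : ↥X, (⨅ t : S, (a : S →ᵇ ℝ) t) ≤ μ a ∧ μ a ≤ ⨆ t : S, (a : S →ᵇ ℝ) t)
    (hμinv : ∀ (a : ↥X) (s : S), μ ⟨transBCF s a.1, hXinv a.1 a.2 s⟩ = μ a)
    (z : E) (hzC : z ∈ C)
    (hfix : ∀ (f : E →L[ℝ] ℝ) (a : S →ᵇ ℝ) (ha : a ∈ X),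
      (∀ t : S, a t = f (T t z)) → μ ⟨a, ha⟩ = f z) :
    ∀ t : S, T t z = z :=
  stmt17_general C hwcpt hOpial T hmaps hne hsg X hXinv hXorb μ hμmean hμinv z hzC hfix
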